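/- Suppose matrices A_n(z) = U(z) z^{-n} + A_n^+(z) with A_n^+(z) = O(z) as z → 0 satisfy the zero-curvature equations [∂_{t_m} - A_m(z), ∂_{t_n} - A_n(z)] = 0 for all m, n ≥ 1. Then for each n, [∂_{t_n} - A_n(z), U(z)] = O(z^{m-n}) for every m, and hence [∂_{t_n} - A_n(z), U(z)] = 0 as a Laurent series identity. -/

import Mathlib

/-!
Write `C n = ∂ₙU - [Aₙ, U]`. Inserting `Aₙ = z⁻ⁿ U + Aₙ⁺` into the zero-curvature equation for
`(m, n)` gives `z⁻ᵐ C n = z⁻ⁿ C m + R`, where `R` collects the terms built from `Aₘ⁺, Aₙ⁺` alone and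
is `O(z)`. Since `[Aₙ, U] = [Aₙ⁺, U]`, every `C m` is `O(z^u)` for one `u` bounding the order of
`U`, so `C n = z^{m-n} C m + zᵐ R = O(z^{min(m-n+u, m+1)})`. Letting `m → ∞` forces `C n = 0`.
-/

/-- `MatOrd X k` : the 2×2 matrix `X` of Laurent series is `O(z^k)`, i.e.
all its entries have no terms of degree below `k`. -/
def MatOrd (X : Matrix (Fin 2) (Fin 2) (LaurentSeries ℂ)) (k : ℤ) : Prop :=
  ∀ i j, ∀ l : ℤ, l < k → (X i j).coeff l = 0

section ZeroCurvature

variable {K M : Type*} [CommRing K] [Ring M] [Module K M] [SMulCommClass K M M]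
  [IsScalarTower K M M]

theorem mul_sub_mul_eq_of_eq_smul_add {A U P : M} {c : K} (hA : A = c • U + P) :
    A * U - U * A = P * U - U * P := by
  subst hA
  simp only [add_mul, mul_add, smul_mul_assoc, mul_smul_comm]
  abel

theorem smul_laxDefect_eq_of_zeroCurvature {Dm Dn : M → M}
    (hDm_add : ∀ a b, Dm (a + b) = Dm a + Dm b) (hDn_add : ∀ a b, Dn (a + b) = Dn a + Dn b)
    (hDm_smul : ∀ (c : K) a, Dm (c • a) = c • Dm a) (hDn_smul : ∀ (c : K) a, Dn (c • a) = c • Dn a)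
    {Am An U P Q : M} {c d : K} (hAm : Am = c • U + P) (hAn : An = d • U + Q)
    (hzc : Dn Am - Dm An + (Am * An - An * Am) = 0) :
    c • (Dn U - (An * U - U * An)) =
      d • (Dm U - (Am * U - U * Am)) + (Dm Q - Dn P - (P * Q - Q * P)) := by
  rw [mul_sub_mul_eq_of_eq_smul_add hAm, mul_sub_mul_eq_of_eq_smul_add hAn]
  subst hAm hAn
  simp only [hDm_add, hDn_add, hDm_smul, hDn_smul, add_mul, mul_add, smul_mul_assoc,
    mul_smul_comm] at hzc
  linear_combination (norm := module) hzc

end ZeroCurvature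

theorem matOrd_iff_le_orderTop {X : Matrix (Fin 2) (Fin 2) (LaurentSeries ℂ)} {k : ℤ} :
    MatOrd X k ↔ ∀ i j, (k : WithTop ℤ) ≤ (X i j).orderTop := by
  simp only [MatOrd, HahnSeries.le_orderTop_iff_forall, WithTop.coe_lt_coe]

theorem exists_matOrd (X : Matrix (Fin 2) (Fin 2) (LaurentSeries ℂ)) : ∃ k, MatOrd X k := by
  obtain ⟨k, hk⟩ := (Set.finite_range fun p : Fin 2 × Fin 2 => (X p.1 p.2).order).bddBelow
  exact ⟨k, fun i j l hl =>
    HahnSeries.coeff_eq_zero_of_lt_order (hl.trans_le (hk ⟨(i, j), rfl⟩))⟩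

namespace MatOrd

variable {X Y : Matrix (Fin 2) (Fin 2) (LaurentSeries ℂ)} {a k l : ℤ}

theorem zero (k : ℤ) : MatOrd 0 k := fun _ _ _ _ => rfl

theorem mono (hlk : l ≤ k) (hX : MatOrd X k) : MatOrd X l :=
  fun i j n hn => hX i j n (hn.trans_le hlk)

theorem add (hX : MatOrd X k) (hY : MatOrd Y k) : MatOrd (X + Y) k := by
  rw [matOrd_iff_le_orderTop] at *
  exact fun i j => (le_min (hX i j) (hY i j)).trans HahnSeries.min_orderTop_le_orderTop_add

theorem sub (hX : MatOrd X k) (hY : MatOrd Y k) : MatOrd (X - Y) k := by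
  rw [matOrd_iff_le_orderTop] at *
  exact fun i j => (le_min (hX i j) (hY i j)).trans HahnSeries.min_orderTop_le_orderTop_sub

theorem smul {c : LaurentSeries ℂ} (hc : (a : WithTop ℤ) ≤ c.orderTop) (hX : MatOrd X k) :
    MatOrd (c • X) (a + k) := by
  rw [matOrd_iff_le_orderTop] at *
  exact fun i j => (add_le_add hc (hX i j)).trans HahnSeries.orderTop_add_le_mul

theorem mul (hX : MatOrd X a) (hY : MatOrd Y k) : MatOrd (X * Y) (a + k) := by
  rw [matOrd_iff_le_orderTop] at *
  intro i j
  have hterm : ∀ r, ((a + k : ℤ) : WithTop ℤ) ≤ (X i r * Y r j).orderTop :=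
    fun r => (add_le_add (hX i r) (hY r j)).trans HahnSeries.orderTop_add_le_mul
  rw [Matrix.mul_apply, Fin.sum_univ_two]
  exact (le_min (hterm 0) (hterm 1)).trans HahnSeries.min_orderTop_le_orderTop_add

theorem eq_zero (hX : ∀ k, MatOrd X k) : X = 0 := by
  ext i j l
  exact hX (l + 1) i j l (lt_add_one l)

end MatOrd

theorem single_smul_single_smul (a b : ℤ) (X : Matrix (Fin 2) (Fin 2) (LaurentSeries ℂ)) :
    (HahnSeries.single a (1 : ℂ) : LaurentSeries ℂ) •
      (HahnSeries.single b (1 : ℂ) : LaurentSeries ℂ) • X =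
      (HahnSeries.single (a + b) (1 : ℂ) : LaurentSeries ℂ) • X := by
  rw [smul_smul, HahnSeries.single_mul_single, mul_one]

theorem eq_zero_of_single_smul_eq {C : ℕ → Matrix (Fin 2) (Fin 2) (LaurentSeries ℂ)}
    {R : ℕ → ℕ → Matrix (Fin 2) (Fin 2) (LaurentSeries ℂ)} {u : ℤ}
    (hC : ∀ n, MatOrd (C n) u) (hR : ∀ m n, MatOrd (R m n) 1)
    (hrel : ∀ m n : ℕ, (HahnSeries.single (-(m : ℤ)) (1 : ℂ) : LaurentSeries ℂ) • C n =
      (HahnSeries.single (-(n : ℤ)) (1 : ℂ) : LaurentSeries ℂ) • C m + R m n)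
    (n : ℕ) : C n = 0 := by
  refine MatOrd.eq_zero fun k => ?_
  set m : ℕ := (max (k + n - u) (k - 1)).toNat
  have hm : max (k + n - u) (k - 1) ≤ m := Int.self_le_toNat _
  have hshift : C n = (HahnSeries.single ((m : ℤ) - n) (1 : ℂ) : LaurentSeries ℂ) • C m +
      (HahnSeries.single (m : ℤ) (1 : ℂ) : LaurentSeries ℂ) • R m n :=
    calc C n = (HahnSeries.single (m : ℤ) (1 : ℂ) : LaurentSeries ℂ) •
          (HahnSeries.single (-(m : ℤ)) (1 : ℂ) : LaurentSeries ℂ) • C n := by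
          rw [single_smul_single_smul, add_neg_cancel, HahnSeries.single_zero_one, one_smul]
      _ = _ := by
        rw [hrel, sub_eq_add_neg, ← single_smul_single_smul]
        -- `rw [smul_add]` does not unify with the `Matrix.smul` instance, the term does
        exact smul_add (M := LaurentSeries ℂ) _ _ (R m n)
  rw [hshift]
  exact ((MatOrd.smul HahnSeries.orderTop_single_le (hC m)).mono (by omega)).add
    ((MatOrd.smul HahnSeries.orderTop_single_le (hR m n)).mono (by omega))

theorem stmt8_general
    (D : ℕ → Matrix (Fin 2) (Fin 2) (LaurentSeries ℂ) →
      Matrix (Fin 2) (Fin 2) (LaurentSeries ℂ))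
    (hadd : ∀ m a b, D m (a + b) = D m a + D m b)
    (hDz : ∀ m (c : LaurentSeries ℂ) X, D m (c • X) = c • D m X)
    (hDord : ∀ m X k, MatOrd X k → MatOrd (D m X) k)
    (A Ap : ℕ → Matrix (Fin 2) (Fin 2) (LaurentSeries ℂ))
    (U : Matrix (Fin 2) (Fin 2) (LaurentSeries ℂ))
    (hA : ∀ n : ℕ, A n =
      (HahnSeries.single (-(n : ℤ)) (1 : ℂ) : LaurentSeries ℂ) • U + Ap n)
    (hAp : ∀ n, MatOrd (Ap n) 1)
    (hzc : ∀ m n, D n (A m) - D m (A n) + (A m * A n - A n * A m) = 0) :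
    (∀ n m : ℕ, MatOrd (D n U - (A n * U - U * A n)) ((m : ℤ) - (n : ℤ))) ∧
    (∀ n, D n U - (A n * U - U * A n) = 0) := by
  obtain ⟨u, hU⟩ := exists_matOrd U
  have hC : ∀ n, MatOrd (D n U - (A n * U - U * A n)) u := fun n => by
    rw [mul_sub_mul_eq_of_eq_smul_add (K := LaurentSeries ℂ) (hA n)]
    exact (hDord n U u hU).sub
      ((((hAp n).mul hU).mono (by omega)).sub ((hU.mul (hAp n)).mono (by omega)))
  have hR : ∀ m n, MatOrd (D m (Ap n) - D n (Ap m) - (Ap m * Ap n - Ap n * Ap m)) 1 :=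
    fun m n => ((hDord m _ 1 (hAp n)).sub (hDord n _ 1 (hAp m))).sub
      (((hAp m).mul (hAp n)).sub ((hAp n).mul (hAp m)) |>.mono (by omega))
  have hzero := eq_zero_of_single_smul_eq hC hR fun m n =>
    smul_laxDefect_eq_of_zeroCurvature (K := LaurentSeries ℂ) (hadd m) (hadd n) (hDz m) (hDz n)
      (hA m) (hA n) (hzc m n)
  exact ⟨fun n m => hzero n ▸ MatOrd.zero _, hzero⟩

/-- if `A_n(z) = U(z) z⁻ⁿ + A_n⁺(z)` with `A_n⁺ = O(z)` satisfy
the zero-curvature equations for all `m, n`, then for each `n`,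
`[∂_{t_n} - A_n, U] = O(z^{m-n})` for every `m`, hence `[∂_{t_n} - A_n, U] = 0`. -/
theorem stmt8
    (D : ℕ → Matrix (Fin 2) (Fin 2) (LaurentSeries ℂ) →
      Matrix (Fin 2) (Fin 2) (LaurentSeries ℂ))
    (hadd : ∀ m a b, D m (a + b) = D m a + D m b)
    (hmul : ∀ m a b, D m (a * b) = D m a * b + a * D m b)
    (hDz : ∀ m (c : LaurentSeries ℂ) X, D m (c • X) = c • D m X)
    (hDord : ∀ m X k, MatOrd X k → MatOrd (D m X) k)
    (A Ap : ℕ → Matrix (Fin 2) (Fin 2) (LaurentSeries ℂ))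
    (U : Matrix (Fin 2) (Fin 2) (LaurentSeries ℂ))
    (hA : ∀ n : ℕ, A n =
      (HahnSeries.single (-(n : ℤ)) (1 : ℂ) : LaurentSeries ℂ) • U + Ap n)
    (hAp : ∀ n, MatOrd (Ap n) 1)
    (hzc : ∀ m n, D n (A m) - D m (A n) + (A m * A n - A n * A m) = 0) :
    (∀ n m : ℕ, MatOrd (D n U - (A n * U - U * A n)) ((m : ℤ) - (n : ℤ))) ∧
    (∀ n, D n U - (A n * U - U * A n) = 0) :=
  stmt8_general D hadd hDz hDord A Ap U hA hAp hzc
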